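/- Let t be a real number with 1/2 < t < √2/2, set α = 2·arccos(t) and a = log((1+t)/(1−t)), and let c₁, c₂ ≥ 0 be the real numbers satisfying cos²α = (cosh²(c₁)·sin²α − 1)·(cosh²(a/2)·sin²α − 1) and cos²(α/2) = (cosh²(c₂)·sin²(α/2) − 1)·(cosh²(a/2)·sin²α − 1). Then 2a + 2(c₁ + c₂) = 2·log((√(5t²−1)+2t²)/((2t−1)(1−t))). -/

import Mathlib

/-!
With `cos (arccos t) = t` and `a / 2 = artanh t`, both equations become linear in `cosh² cᵢ`:
writing `D = (1 - t²)(4t² - 1)`, they say `D cosh² c₁ = t²` and `D cosh² c₂ = 5t² - 1`.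
Since `cᵢ ≥ 0`, `exp cᵢ = cosh cᵢ + √(cosh² cᵢ - 1)`, which gives
`√D exp c₁ = (1 - t)(1 + 2t)` and `√D exp c₂ = √(5t² - 1) + 2t²`. Multiplying by
`exp a = (1 + t)/(1 - t)` and cancelling `D = (1 - t)(1 + t)(2t - 1)(2t + 1)` yields the
closed form.
-/

open Real

lemma cos_two_mul_arccos {t : ℝ} (h₁ : -1 ≤ t) (h₂ : t ≤ 1) :
    cos (2 * arccos t) = 2 * t ^ 2 - 1 := by
  rw [cos_two_mul, cos_arccos h₁ h₂]

lemma sin_two_mul_arccos_sq {t : ℝ} (h₁ : -1 ≤ t) (h₂ : t ≤ 1) :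
    sin (2 * arccos t) ^ 2 = 4 * t ^ 2 * (1 - t ^ 2) := by
  rw [sin_two_mul, mul_pow, mul_pow, sin_arccos, cos_arccos h₁ h₂, sq_sqrt (by nlinarith)]
  ring

lemma cosh_half_log_sq {t : ℝ} (h₁ : -1 < t) (h₂ : t < 1) :
    cosh (log ((1 + t) / (1 - t)) / 2) ^ 2 = 1 / (1 - t ^ 2) := by
  have hartanh : log ((1 + t) / (1 - t)) / 2 = artanh t := by
    rw [artanh_eq_half_log ⟨h₁.le, h₂.le⟩]
    ring
  rw [hartanh, cosh_artanh ⟨h₁, h₂⟩, div_pow, one_pow, sq_sqrt (by nlinarith)]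

lemma cosh_half_log_sq_mul_sin_two_mul_arccos_sq {t : ℝ} (h₁ : -1 < t) (h₂ : t < 1) :
    cosh (log ((1 + t) / (1 - t)) / 2) ^ 2 * sin (2 * arccos t) ^ 2 = 4 * t ^ 2 := by
  rw [cosh_half_log_sq h₁ h₂, sin_two_mul_arccos_sq h₁.le h₂.le]
  field_simp [(by nlinarith : 1 - t ^ 2 ≠ 0)]

lemma exp_eq_of_cosh_sq_mul {c x y D : ℝ} (hc : 0 ≤ c) (hD : 0 < D) (hx : 0 ≤ x)
    (hy : 0 ≤ y) (hcosh : cosh c ^ 2 * D = x ^ 2) (hxy : x ^ 2 - y ^ 2 = D) :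
    exp c = (x + y) / √D := by
  have hs : 0 < √D := sqrt_pos.mpr hD
  have hcosh' : cosh c * √D = x := by
    rw [← pow_left_inj₀ (by positivity) hx two_ne_zero, mul_pow, sq_sqrt hD.le, hcosh]
  have hsinh' : sinh c * √D = y := by
    rw [← pow_left_inj₀ (mul_nonneg (sinh_nonneg_iff.mpr hc) hs.le) hy two_ne_zero, mul_pow,
      sq_sqrt hD.le, ← sub_eq_of_eq_add (cosh_sq c)]
    linear_combination hcosh + hxy
  rw [← cosh_add_sinh, eq_div_iff hs.ne', add_mul, hcosh', hsinh']

lemma exp_of_hexagon_eq₁ {t c : ℝ} (ht : 1 / 2 < t) (ht' : 2 * t ^ 2 ≤ 1) (hc : 0 ≤ c)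
    (h : (2 * t ^ 2 - 1) ^ 2 = (cosh c ^ 2 * (4 * t ^ 2 * (1 - t ^ 2)) - 1) * (4 * t ^ 2 - 1)) :
    exp c = (t + (1 - 2 * t ^ 2)) / √((1 - t ^ 2) * (4 * t ^ 2 - 1)) := by
  refine exp_eq_of_cosh_sq_mul hc (mul_pos (by nlinarith) (by nlinarith)) (by linarith)
    (by linarith) ?_ (by ring)
  have : 4 * t ^ 2 * (cosh c ^ 2 * ((1 - t ^ 2) * (4 * t ^ 2 - 1)) - t ^ 2) = 0 := by
    linear_combination -h
  exact sub_eq_zero.mp ((mul_eq_zero.mp this).resolve_left (by positivity))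

lemma exp_of_hexagon_eq₂ {t c : ℝ} (ht : 1 / 2 < t) (ht' : t < 1) (hc : 0 ≤ c)
    (h : t ^ 2 = (cosh c ^ 2 * (1 - t ^ 2) - 1) * (4 * t ^ 2 - 1)) :
    exp c = (√(5 * t ^ 2 - 1) + 2 * t ^ 2) / √((1 - t ^ 2) * (4 * t ^ 2 - 1)) := by
  refine exp_eq_of_cosh_sq_mul hc (mul_pos (by nlinarith) (by nlinarith)) (sqrt_nonneg _)
    (by positivity) ?_ ?_
  · rw [sq_sqrt (by nlinarith)]
    linear_combination -h
  · rw [sq_sqrt (by nlinarith)]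
    ring

theorem length_on_axis (t : ℝ) (h0 : 1 / 2 < t) (h1 : t < Real.sqrt 2 / 2)
    (c₁ c₂ : ℝ) (hc₁ : 0 ≤ c₁) (hc₂ : 0 ≤ c₂)
    (heq₁ : cos (2 * arccos t) ^ 2 =
        (Real.cosh c₁ ^ 2 * sin (2 * arccos t) ^ 2 - 1) *
          (Real.cosh (log ((1 + t) / (1 - t)) / 2) ^ 2 * sin (2 * arccos t) ^ 2 - 1))
    (heq₂ : cos (2 * arccos t / 2) ^ 2 =
        (Real.cosh c₂ ^ 2 * sin (2 * arccos t / 2) ^ 2 - 1) *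
          (Real.cosh (log ((1 + t) / (1 - t)) / 2) ^ 2 * sin (2 * arccos t) ^ 2 - 1)) :
    2 * log ((1 + t) / (1 - t)) + 2 * (c₁ + c₂) =
      2 * log ((Real.sqrt (5 * t ^ 2 - 1) + 2 * t ^ 2) / ((2 * t - 1) * (1 - t))) := by
  have ht2 : 2 * t ^ 2 < 1 := by nlinarith [sq_sqrt (zero_le_two : (0 : ℝ) ≤ 2), sqrt_nonneg 2]
  have ht1 : t < 1 := by nlinarith
  rw [cosh_half_log_sq_mul_sin_two_mul_arccos_sq (by linarith) ht1] at heq₁ heq₂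
  rw [sin_two_mul_arccos_sq (by linarith) ht1.le, cos_two_mul_arccos (by linarith) ht1.le] at heq₁
  rw [mul_div_cancel_left₀ _ two_ne_zero, sin_arccos, cos_arccos (by linarith) ht1.le,
    sq_sqrt (by nlinarith)] at heq₂
  have hexp : exp (log ((1 + t) / (1 - t)) + (c₁ + c₂)) =
      (√(5 * t ^ 2 - 1) + 2 * t ^ 2) / ((2 * t - 1) * (1 - t)) := by
    rw [exp_add, exp_add, exp_log (div_pos (by linarith) (by linarith)),
      exp_of_hexagon_eq₁ h0 ht2.le hc₁ heq₁, exp_of_hexagon_eq₂ h0 ht1 hc₂ heq₂]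
    have hD : 0 < (1 - t ^ 2) * (4 * t ^ 2 - 1) := mul_pos (by nlinarith) (by nlinarith)
    have hs := sq_sqrt hD.le
    have hs0 := (sqrt_pos.mpr hD).ne'
    set s := √((1 - t ^ 2) * (4 * t ^ 2 - 1))
    field_simp [hs0, (by linarith : 1 - t ≠ 0), (by linarith : 2 * t - 1 ≠ 0)]
    rw [hs, eq_div_iff (by linarith)]
    ring
  rw [← hexp, log_exp]
  ring
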